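/- The trace of the twisted cyclic shift c_φ on the d-th tensor power V^{⊗d} equals the trace of φ on V. -/

import Mathlib

open scoped TensorProduct

open Module

/-!
Write `c_φ(v) = snoc (tail v) (φ (v 0))`. In the product basis `b_p = ⊗ᵢ b_{p i}`, the diagonal
coefficient of `c_φ` at `p` is `∏_{i < d-1} δ(p (i+1), p i) · [φ]_{p (d-1), p 0}`: it vanishes
unless `p` is constant, and at the constant family `a` it is the diagonal entry `[φ]_{a,a}`.
-/

theorem Fin.forall_succ_eq_castSucc_iff {α : Type*} {n : ℕ} {p : Fin (n + 1) → α} :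
    (∀ j : Fin n, p j.succ = p j.castSucc) ↔ p = Function.const _ (p 0) := by
  refine ⟨fun h => funext fun i => ?_, fun h j => by rw [h]; rfl⟩
  induction i using Fin.induction with
  | zero => rfl
  | succ j ih => rw [h j, ih]; rfl

section TwistedShift

variable {R M : Type*} [CommRing R] [AddCommGroup M] [Module R M]

theorem Module.Basis.piTensorProduct_repr_tprod_snoc_tail {κ : Type*} [DecidableEq κ]
    (b : Basis κ R M) {n : ℕ} (φ : M →ₗ[R] M) (p : Fin (n + 1) → κ) :
    (Basis.piTensorProduct fun _ => b).repr
        (PiTensorProduct.tprod R (Fin.snoc (Fin.tail (b ∘ p)) (φ (b (p 0))))) p =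
      if p = Function.const _ (p 0) then b.repr (φ (b (p 0))) (p 0) else 0 := by
  simp only [Basis.piTensorProduct_repr_tprod_apply, Fin.prod_univ_castSucc, Fin.snoc_castSucc,
    Fin.snoc_last, Fin.tail, Function.comp_apply, Basis.repr_self, Finsupp.single_apply,
    Finset.prod_boole, Finset.mem_univ, forall_const, Fin.forall_succ_eq_castSucc_iff]
  split_ifs with h
  · rw [one_mul, congr_fun h (Fin.last n)]
    rfl
  · rw [zero_mul]

theorem LinearMap.trace_eq_of_tprod_snoc_tail [Free R M] [Module.Finite R M] {n : ℕ}
    (φ : M →ₗ[R] M) (c : (⨂[R] _ : Fin (n + 1), M) →ₗ[R] ⨂[R] _ : Fin (n + 1), M)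
    (hc : ∀ v, c (PiTensorProduct.tprod R v) =
      PiTensorProduct.tprod R (Fin.snoc (Fin.tail v) (φ (v 0)))) :
    trace R _ c = trace R M φ := by
  classical
  let b := Free.chooseBasis R M
  let B := Basis.piTensorProduct fun _ : Fin (n + 1) => b
  have hdiag (p : Fin (n + 1) → Free.ChooseBasisIndex R M) : (toMatrix B B c).diag p =
      if p = Function.const _ (p 0) then (toMatrix b b φ).diag (p 0) else 0 := by
    simp only [Matrix.diag_apply, toMatrix_apply, B, Basis.piTensorProduct_apply, hc]
    exact b.piTensorProduct_repr_tprod_snoc_tail φ p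
  rw [trace_eq_matrix_trace R B, trace_eq_matrix_trace R b, Matrix.trace, Matrix.trace]
  refine (Fintype.sum_of_injective (Function.const _) Function.const_injective _ _
    (fun p hp => ?_) fun a => ?_).symm
  · rw [hdiag, if_neg fun h => hp ⟨_, h.symm⟩]
  · rw [hdiag]
    exact (if_pos rfl).symm

end TwistedShift

theorem stmt_10 {k V : Type*} [Field k] [AddCommGroup V] [Module k V]
    [FiniteDimensional k V] (d : ℕ) (hd : 1 ≤ d) (φ : V →ₗ[k] V)
    (c : (⨂[k] _ : Fin d, V) →ₗ[k] ⨂[k] _ : Fin d, V)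
    (hc : ∀ v : Fin d → V,
      c (PiTensorProduct.tprod k v) =
        PiTensorProduct.tprod k fun i : Fin d =>
          if h : (i : ℕ) + 1 = d then φ (v ⟨0, by omega⟩)
          else v ⟨(i : ℕ) + 1, by have := i.isLt; omega⟩) :
    LinearMap.trace k (⨂[k] _ : Fin d, V) c = LinearMap.trace k V φ := by
  obtain ⟨n, rfl⟩ : ∃ n, d = n + 1 := ⟨d - 1, by omega⟩
  refine LinearMap.trace_eq_of_tprod_snoc_tail φ c fun v => ?_
  rw [hc]
  congr 1
  funext i
  induction i using Fin.lastCases with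
  | last =>
    rw [Fin.snoc_last, dif_pos (by simp)]
    rfl
  | cast j =>
    rw [Fin.snoc_castSucc, dif_neg (by simp [j.isLt.ne])]
    rfl
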